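/- arXiv:2403.16120 — 2 statements merged into one kernel-verified Lean document; each statement's English description precedes it below -/
import Mathlib

section
/- Let c_1,...,c_t > 0 with ∑ c_α = 1, f_1,...,f_t > 0, τ > 0, and t_0 > 0 with ∑_α τ c_α/(f_α+t_0) = 1. Then for every n×n positive-semidefinite Hermitian matrix H, the quantity ∑_α c_α log det(f_α·I_n + H) − (1/τ)·Tr(H) is at most its value at H = t_0·I_n, namely n·(∑_α c_α log(f_α+t_0) − t_0/τ), with equality if and only if H = t_0·I_n. -/
open Finset Matrix
open scoped ComplexOrder

/-- the function `F(H) = ∑ c_α log det(f_α I + H) − (1/τ) Tr H` on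
positive-semidefinite Hermitian `n×n` complex matrices attains its maximum value at
`H = t₀ I`, with equality iff `H = t₀ I`. -/
lemma scalar_lt {t : ℕ} {c f : Fin t → ℝ} {τ t₀ : ℝ}
    (hc : ∀ α, 0 < c α) (hf : ∀ α, 0 < f α) (hτ : 0 < τ) (ht₀ : 0 < t₀)
    (heq : ∑ α, τ * c α / (f α + t₀) = 1) (hne : Nonempty (Fin t))
    {x : ℝ} (hx : 0 ≤ x) (hxt : x ≠ t₀) :
    (∑ α, c α * Real.log (f α + x)) - x / τ <
      (∑ α, c α * Real.log (f α + t₀)) - t₀ / τ := by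
  have hsum1 : ∑ α, c α / (f α + t₀) = 1 / τ := by
    rw [eq_div_iff (ne_of_gt hτ)]
    calc (∑ α, c α / (f α + t₀)) * τ = ∑ α, τ * c α / (f α + t₀) := by
          rw [Finset.sum_mul]; exact Finset.sum_congr rfl fun α _ => by ring
      _ = 1 := heq
  have key : ∑ α, c α * (Real.log (f α + x) - Real.log (f α + t₀)) <
      ∑ α, c α * ((x - t₀) / (f α + t₀)) := by
    apply Finset.sum_lt_sum_of_nonempty (Finset.univ_nonempty)
    intro α _
    have hfx : 0 < f α + x := by linarith [hf α]
    have hft : 0 < f α + t₀ := by linarith [hf α]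
    have hr : (0:ℝ) < (f α + x) / (f α + t₀) := div_pos hfx hft
    have hr1 : (f α + x) / (f α + t₀) ≠ 1 := by
      intro h
      have h2 : f α + x = f α + t₀ := by
        field_simp at h; linarith
      exact hxt (by linarith)
    have := Real.log_lt_sub_one_of_pos hr hr1
    rw [Real.log_div (ne_of_gt hfx) (ne_of_gt hft)] at this
    have h2 : (f α + x) / (f α + t₀) - 1 = (x - t₀) / (f α + t₀) := by
      field_simp; ring
    rw [h2] at this
    exact mul_lt_mul_of_pos_left this (hc α)
  have hrhs : ∑ α, c α * ((x - t₀) / (f α + t₀)) = (x - t₀) / τ := by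
    calc ∑ α, c α * ((x - t₀) / (f α + t₀))
        = (x - t₀) * ∑ α, c α / (f α + t₀) := by
          rw [Finset.mul_sum]; exact Finset.sum_congr rfl fun α _ => by ring
      _ = (x - t₀) * (1 / τ) := by rw [hsum1]
      _ = (x - t₀) / τ := by ring
  rw [hrhs] at key
  have hsub : ∑ α, c α * (Real.log (f α + x) - Real.log (f α + t₀)) =
      (∑ α, c α * Real.log (f α + x)) - ∑ α, c α * Real.log (f α + t₀) := by
    rw [← Finset.sum_sub_distrib]; exact Finset.sum_congr rfl fun α _ => by ring
  rw [hsub] at key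
  have : (x - t₀) / τ = x / τ - t₀ / τ := by ring
  linarith [key, this.le]

theorem stmt2 (t n : ℕ) (c f : Fin t → ℝ) (τ t₀ : ℝ)
    (hc : ∀ α, 0 < c α) (hsum : ∑ α, c α = 1) (hf : ∀ α, 0 < f α)
    (hτ : 0 < τ) (ht₀ : 0 < t₀)
    (heq : ∑ α, τ * c α / (f α + t₀) = 1)
    (F : Matrix (Fin n) (Fin n) ℂ → ℝ)
    (hF : ∀ H, F H = ∑ α, c α * Real.log (((f α • (1 : Matrix (Fin n) (Fin n) ℂ) + H).det).re)
        - (1 / τ) * (Matrix.trace H).re)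
    (H : Matrix (Fin n) (Fin n) ℂ) (hH : H.PosSemidef) :
    F H ≤ F (t₀ • (1 : Matrix (Fin n) (Fin n) ℂ)) ∧
      (F H = F (t₀ • (1 : Matrix (Fin n) (Fin n) ℂ)) ↔
        H = t₀ • (1 : Matrix (Fin n) (Fin n) ℂ)) := by
  have htne : Nonempty (Fin t) := by
    rcases Nat.eq_zero_or_pos t with h | h
    · subst h; simp at hsum
    · exact Fin.pos_iff_nonempty.mp h
  have hHer := hH.1
  set lam := hHer.eigenvalues with hlamdef
  have hlam0 : ∀ i, 0 ≤ lam i := hH.eigenvalues_nonneg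
  set U : Matrix (Fin n) (Fin n) ℂ := (hHer.eigenvectorUnitary : Matrix (Fin n) (Fin n) ℂ) with hUdef
  have hUU : U * star U = 1 := mem_unitaryGroup_iff.mp (hHer.eigenvectorUnitary).2
  have hUU' : star U * U = 1 := mem_unitaryGroup_iff'.mp (hHer.eigenvectorUnitary).2
  have hsp : H = U * diagonal (RCLike.ofReal ∘ lam) * star U := hHer.spectral_theorem
  have h2 : ∀ r : ℝ, U * (r • (1 : Matrix (Fin n) (Fin n) ℂ)) * star U
      = r • (1 : Matrix (Fin n) (Fin n) ℂ) := by
    intro r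
    rw [mul_smul_comm, mul_one, smul_mul_assoc, hUU]
  have hdet : ∀ r : ℝ, (r • (1 : Matrix (Fin n) (Fin n) ℂ) + H).det
      = ((∏ i, (r + lam i) : ℝ) : ℂ) := by
    intro r
    have hdg : diagonal (fun i => ((r + lam i : ℝ) : ℂ))
        = r • (1 : Matrix (Fin n) (Fin n) ℂ) + diagonal (RCLike.ofReal ∘ lam) := by
      ext i j
      by_cases hij : i = j <;>
        simp [diagonal, hij, Matrix.one_apply, Complex.ofReal_add, Function.comp,
          Matrix.smul_apply, Complex.real_smul]
    have h1 : r • (1 : Matrix (Fin n) (Fin n) ℂ) + H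
        = U * diagonal (fun i => ((r + lam i : ℝ) : ℂ)) * star U := by
      rw [hdg, mul_add, add_mul, ← hsp, h2]
    rw [h1, det_mul, det_mul, det_diagonal]
    rw [show U.det * (∏ i, ((r + lam i : ℝ) : ℂ)) * (star U).det
        = (U.det * (star U).det) * ∏ i, ((r + lam i : ℝ) : ℂ) from by ring,
      ← det_mul, hUU, det_one, one_mul, Complex.ofReal_prod]
  have htr : (Matrix.trace H).re = ∑ i, lam i := by
    have h3 : Matrix.trace H = ∑ i, ((lam i : ℝ) : ℂ) := by
      conv_lhs => rw [hsp]
      rw [Matrix.trace_mul_cycle, hUU', Matrix.one_mul,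
        Matrix.trace_diagonal]
      simp [Function.comp]
    rw [h3, Complex.re_sum]
    simp
  set g : ℝ → ℝ := fun x => (∑ α, c α * Real.log (f α + x)) - x / τ with hg
  have hFH : F H = ∑ i, g (lam i) := by
    rw [hF]
    have hre : ∀ α, ((f α • (1 : Matrix (Fin n) (Fin n) ℂ) + H).det).re
        = ∏ i, (f α + lam i) := by
      intro α; rw [hdet (f α), Complex.ofReal_re]
    have hlog : ∀ α, Real.log (∏ i, (f α + lam i)) = ∑ i, Real.log (f α + lam i) := by
      intro α
      exact Real.log_prod (fun i _ => by have := hf α; have := hlam0 i; positivity)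
    simp only [hre, hlog, htr]
    calc (∑ α, c α * ∑ i, Real.log (f α + lam i)) - (1 / τ) * ∑ i, lam i
        = (∑ α, ∑ i, c α * Real.log (f α + lam i)) - ∑ i, lam i / τ := by
          rw [Finset.mul_sum]
          congr 1
          · exact Finset.sum_congr rfl fun α _ => Finset.mul_sum _ _ _
          · exact Finset.sum_congr rfl fun i _ => by ring
      _ = (∑ i, ∑ α, c α * Real.log (f α + lam i)) - ∑ i, lam i / τ := by
          rw [Finset.sum_comm]
      _ = ∑ i, ((∑ α, c α * Real.log (f α + lam i)) - lam i / τ) := by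
          rw [Finset.sum_sub_distrib]
  have hdetI : ∀ r s : ℝ, (r • (1 : Matrix (Fin n) (Fin n) ℂ) + s • 1).det
      = (((r + s) ^ n : ℝ) : ℂ) := by
    intro r s
    have : r • (1 : Matrix (Fin n) (Fin n) ℂ) + s • 1 = ((r + s : ℝ) : ℂ) • 1 := by
      ext i j
      by_cases hij : i = j <;>
        simp [Matrix.one_apply, hij, Complex.real_smul, Matrix.smul_apply, Matrix.add_apply] <;>
        ring
    rw [this, det_smul, det_one, mul_one, Fintype.card_fin]
    push_cast
    rfl
  have hFI : F (t₀ • (1 : Matrix (Fin n) (Fin n) ℂ)) = ∑ _i : Fin n, g t₀ := by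
    rw [hF]
    have hre : ∀ α : Fin t,
        ((f α • (1 : Matrix (Fin n) (Fin n) ℂ) + t₀ • 1).det).re = (f α + t₀) ^ n := by
      intro α; rw [hdetI (f α) t₀, Complex.ofReal_re]
    have htr2 : (Matrix.trace (t₀ • (1 : Matrix (Fin n) (Fin n) ℂ))).re = t₀ * n := by
      simp [Matrix.trace_smul, Matrix.trace_one, Complex.real_smul]
    simp only [hre, htr2, Real.log_pow]
    rw [Finset.sum_const, Finset.card_univ, Fintype.card_fin]
    simp only [nsmul_eq_mul, hg]
    rw [mul_sub, Finset.mul_sum]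
    congr 1
    · exact Finset.sum_congr rfl fun α _ => by push_cast; ring
    · push_cast; ring
  have hle : ∀ i, g (lam i) ≤ g t₀ := by
    intro i
    rcases eq_or_ne (lam i) t₀ with h | h
    · rw [h]
    · exact (scalar_lt hc hf hτ ht₀ heq htne (hlam0 i) h).le
  refine ⟨by rw [hFH, hFI]; exact Finset.sum_le_sum fun i _ => hle i, ?_, ?_⟩
  · intro hEq
    rw [hFH, hFI] at hEq
    have h0 : ∑ i, (g t₀ - g (lam i)) = 0 := by
      rw [Finset.sum_sub_distrib]; linarith
    have hall := (Finset.sum_eq_zero_iff_of_nonneg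
      (fun i _ => by linarith [hle i])).mp h0
    have hlamt : ∀ i, lam i = t₀ := by
      intro i
      by_contra h
      have h1 := scalar_lt hc hf hτ ht₀ heq htne (hlam0 i) h
      have h2 := hall i (Finset.mem_univ i)
      simp only [hg] at h1 h2 ⊢
      linarith
    have hdiag : diagonal (RCLike.ofReal ∘ lam)
        = (t₀ : ℂ) • (1 : Matrix (Fin n) (Fin n) ℂ) := by
      ext i j
      by_cases hij : i = j <;>
        simp [diagonal, hij, Matrix.one_apply, hlamt, Function.comp, Matrix.smul_apply]
    have : H = (t₀ : ℂ) • (1 : Matrix (Fin n) (Fin n) ℂ) := by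
      rw [hsp, hdiag, mul_smul_comm, mul_one, smul_mul_assoc, hUU]
    rw [this]
    ext i j
    simp [Matrix.smul_apply, Complex.real_smul]
  · intro h; rw [h]
end

section
/- Let T be an n×n upper-triangular complex matrix with positive diagonal, written T = √(T_d) + T_u with T_d = diag(t_{11},...,t_{nn}) and T_u strictly upper triangular, and suppose T_d = c·I_n + T̃_d for a constant c > 0 and a small diagonal perturbation T̃_d. Then (T·T*)_{ij} = √c·(T_u)_{ij} + E_{ij} for all i < j, where |E_{ij}| ≤ C·(‖T_u‖² + ‖T_u‖·‖T̃_d‖) for a constant C depending only on c and n, provided ‖T̃_d‖ ≤ c/2 (‖·‖ is the Hilbert–Schmidt norm). -/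
/-!
For `i < j` only two terms of `(√T_d + T_u)(√T_d + T_u)*` survive in the `(i, j)` entry:
`(T_u)_{ij} √t_{jj} + (T_u T_u*)_{ij}`. The first differs from `√c (T_u)_{ij}` by at most
`‖T_u‖ |t̃_{jj}| / √c`, because `|√a - √c| ≤ |a - c| / √c`; the second is at most `‖T_u‖²`
by submultiplicativity of the Frobenius norm. Hence `C = 1 + 1/√c` works.
-/

open Finset Matrix

theorem Real.abs_sqrt_sub_sqrt_le {b : ℝ} (hb : 0 < b) (a : ℝ) :
    |√a - √b| ≤ |a - b| / √b := by
  have hsb : 0 < √b := Real.sqrt_pos.mpr hb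
  rw [le_div_iff₀ hsb]
  rcases le_or_gt 0 a with ha | ha
  · have hsum : √b ≤ √a + √b := le_add_of_nonneg_left (Real.sqrt_nonneg a)
    calc |√a - √b| * √b ≤ |√a - √b| * (√a + √b) := by gcongr
      _ = |(√a + √b) * (√a - √b)| := by
        rw [abs_mul, abs_of_pos (hsb.trans_le hsum), mul_comm]
      _ = |a - b| := by rw [← sq_sub_sq, Real.sq_sqrt ha, Real.sq_sqrt hb.le]
  · -- junk value `√a = 0`: the bound becomes `b ≤ b - a`
    rw [Real.sqrt_eq_zero_of_nonpos ha.le, zero_sub, abs_neg, abs_of_pos hsb,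
      ← sq, Real.sq_sqrt hb.le, abs_of_neg (by linarith)]
    linarith

theorem abs_le_sqrt_sum_sq {ι : Type*} [Fintype ι] (d : ι → ℝ) (k : ι) :
    |d k| ≤ √(∑ l, d l ^ 2) :=
  Real.abs_le_sqrt (single_le_sum (f := fun l => d l ^ 2) (fun l _ => sq_nonneg (d l))
    (mem_univ k))

theorem Matrix.diagonal_add_mul_conjTranspose_apply {n R : Type*} [Fintype n] [DecidableEq n]
    [CommRing R] [StarRing R] (D : n → R) (U : Matrix n n R) {i j : n} (hij : i ≠ j)
    (hU : U j i = 0) :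
    ((diagonal D + U) * (diagonal D + U)ᴴ) i j = U i j * star (D j) + (U * Uᴴ) i j := by
  simp only [conjTranspose_add, add_mul, mul_add, add_apply, diagonal_conjTranspose,
    diagonal_mul_diagonal, diagonal_apply_ne _ hij, diagonal_mul, mul_diagonal,
    conjTranspose_apply, hU, star_zero, mul_zero, Pi.star_apply]
  ring

section Frobenius

open scoped Matrix.Norms.Frobenius

variable {m n 𝕜 : Type*} [Fintype m] [Fintype n]

theorem Matrix.frobenius_norm_eq_sqrt [SeminormedAddCommGroup 𝕜] (A : Matrix m n 𝕜) :
    ‖A‖ = √(∑ i, ∑ j, ‖A i j‖ ^ 2) := by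
  simp [frobenius_norm_def, Real.sqrt_eq_rpow]

theorem Matrix.norm_apply_le_frobenius_norm [SeminormedAddCommGroup 𝕜] (A : Matrix m n 𝕜)
    (i : m) (j : n) : ‖A i j‖ ≤ ‖A‖ := by
  rw [frobenius_norm_eq_sqrt, ← abs_norm]
  refine Real.abs_le_sqrt ((single_le_sum (f := fun j => ‖A i j‖ ^ 2) (by intros; positivity)
    (mem_univ j)).trans (single_le_sum (f := fun i => ∑ j, ‖A i j‖ ^ 2) ?_ (mem_univ i)))
  intros; positivity

theorem Matrix.norm_mul_conjTranspose_apply_le [RCLike 𝕜] (A : Matrix m n 𝕜) (i j : m) :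
    ‖(A * Aᴴ) i j‖ ≤ ‖A‖ ^ 2 :=
  calc ‖(A * Aᴴ) i j‖ ≤ ‖A * Aᴴ‖ := norm_apply_le_frobenius_norm _ i j
    _ ≤ ‖A‖ * ‖Aᴴ‖ := frobenius_norm_mul A Aᴴ
    _ = ‖A‖ ^ 2 := by rw [frobenius_norm_conjTranspose, sq]

end Frobenius

/-- first-order expansion of the off-diagonal entries of `T T*` for an
upper-triangular `T = √(c·I + T̃_d) + T_u`: there is a constant `C` depending only on
`c` and `n` such that, whenever `‖T̃_d‖ ≤ c/2`, for all `i < j`,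
`|(T T*)_{ij} − √c (T_u)_{ij}| ≤ C (‖T_u‖² + ‖T_u‖ ‖T̃_d‖)` (Hilbert–Schmidt norms). -/
theorem stmt16 (n : ℕ) (c : ℝ) (hc : 0 < c) :
    ∃ C : ℝ, 0 < C ∧
      ∀ (d : Fin n → ℝ) (Tu : Matrix (Fin n) (Fin n) ℂ),
        (∀ i j : Fin n, ¬ i < j → Tu i j = 0) →
        Real.sqrt (∑ i, d i ^ 2) ≤ c / 2 →
        ∀ i j : Fin n, i < j →
          Norm.norm
            ((((Matrix.diagonal fun k => ((Real.sqrt (c + d k) : ℝ) : ℂ)) + Tu) *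
              ((Matrix.diagonal fun k => ((Real.sqrt (c + d k) : ℝ) : ℂ)) + Tu)ᴴ) i j
              - ((Real.sqrt c : ℝ) : ℂ) * Tu i j)
          ≤ C * (Real.sqrt (∑ k, ∑ l, Norm.norm (Tu k l) ^ 2) ^ 2 +
              Real.sqrt (∑ k, ∑ l, Norm.norm (Tu k l) ^ 2) *
                Real.sqrt (∑ k, d k ^ 2)) := by
  open scoped Matrix.Norms.Frobenius in
  refine ⟨1 + (√c)⁻¹, by positivity, fun d Tu hTu _ i j hij => ?_⟩
  rw [← frobenius_norm_eq_sqrt,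
    diagonal_add_mul_conjTranspose_apply _ _ hij.ne (hTu j i hij.not_gt)]
  have hsqrt : |√(c + d j) - √c| ≤ √(∑ k, d k ^ 2) / √c :=
    (Real.abs_sqrt_sub_sqrt_le hc _).trans (by
      rw [add_sub_cancel_left]; gcongr; exact abs_le_sqrt_sum_sq d j)
  calc _ = ‖Tu i j * ((√(c + d j) - √c : ℝ) : ℂ) + (Tu * Tuᴴ) i j‖ := by
        congr 1; push_cast; rw [Complex.star_def, Complex.conj_ofReal]; ring
    _ ≤ ‖Tu‖ * (√(∑ k, d k ^ 2) / √c) + ‖Tu‖ ^ 2 := by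
      refine norm_add_le_of_le ?_ (norm_mul_conjTranspose_apply_le Tu i j)
      rw [norm_mul, Complex.norm_real, Real.norm_eq_abs]
      exact mul_le_mul (norm_apply_le_frobenius_norm Tu i j) hsqrt (abs_nonneg _) (norm_nonneg _)
    _ ≤ (1 + (√c)⁻¹) * (‖Tu‖ ^ 2 + ‖Tu‖ * √(∑ k, d k ^ 2)) := by
      have hcross : 0 ≤ ‖Tu‖ * √(∑ k, d k ^ 2) := by positivity
      have hsq : 0 ≤ ‖Tu‖ ^ 2 * (√c)⁻¹ := by positivity
      rw [div_eq_mul_inv]; nlinarith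
end
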